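/- arXiv:1612.03411 — 5 statements merged into one kernel-verified Lean document; each statement's English description precedes it below -/
import Mathlib

section
/- Let s ∈ 𝒮 and, for 1 ≤ j ≤ n, let σ_j ∈ 𝒮 be the vector whose j-th coordinate is s_j and whose other coordinates are 1, and let 1 = (1,…,1) ∈ Ω_{σ_j} (note ℓ(σ_j) = s_j). Let d be a vector with r_j | d_j for all j, let (c,(f_α)) ∈ F̂_{[d]} and x ∈ ℙ¹(𝔽_q), and suppose χ_{s_j}(F_{σ_j}^{1}(x)) ≠ 0 for all 1 ≤ j ≤ n. Then for every ω ∈ Ω_s: χ_{ℓ(s)}(F_s^ω(x)) = ∏_{j=1}^n ( χ_{s_j}(F_{σ_j}^{1}(x)) )^{ω_j}. -/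
/-
Put `ℓ = ℓ(s)` and `ψ = χ_ℓ`. Then `χ_{s_j} = ψ^{ℓ/s_j}` and `ψ^ℓ = 1`, so in `ψ` (resp. `χ_{s_j}`)
of a product of nonzero elements all exponents may be read modulo `ℓ` (resp. `s_j`). Expanding
the exponents of `F_s^ω` gives `ψ(F_s^ω(x)) = ∏_j χ_{s_j}(c_j ∏_α f_α(x)^{α_j})^{ω_j}`, and the
exponents of `F_{σ_j}^1` are the `α_j mod s_j`, so the `j`-th factor is `χ_{s_j}(F_{σ_j}^1(x))^{ω_j}`.
Zeros do no harm: if `f_α(x) = 0`, the hypothesis `χ_{s_j}(F_{σ_j}^1(x)) ≠ 0` forces `s_j ∣ α_j` for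
every `j`, so `f_α` occurs in none of these polynomials; at `x = ∞` it forces `s_j ∣ d_j` likewise.
-/

open Polynomial Finset

section Setup

variable {Fq : Type} [Field Fq] [Fintype Fq] [DecidableEq Fq]
variable {n : ℕ}

/-- The index set `R`: vectors `α` with `α j < r j`, not all zero. -/
def Rfin (r : Fin (n+1) → ℕ) : Finset (Fin (n+1) → ℕ) :=
  (Fintype.piFinset fun j => Finset.range (r j)).erase (fun _ => 0)

/-- The index set `R' = R ∪ {0}`. -/
def Rfin' (r : Fin (n+1) → ℕ) : Finset (Fin (n+1) → ℕ) :=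
  Fintype.piFinset fun j => Finset.range (r j)

abbrev Rty (r : Fin (n+1) → ℕ) := {α : Fin (n+1) → ℕ // α ∈ Rfin r}

/-- `|G| = r_1 ⋯ r_n`. -/
def cardG (r : Fin (n+1) → ℕ) : ℕ := ∏ j, r j

/-- number of elements of order `s` in `G = ℤ/r_1 × ⋯ × ℤ/r_n`. -/
noncomputable def phiG (r : Fin (n+1) → ℕ) (s : ℕ) : ℕ :=
  Nat.card {g : ∀ j, ZMod (r j) // addOrderOf g = s}

/-- `e(β) = lcm_j (r_j / gcd(r_j, β_j))`. -/
def eOf (r : Fin (n+1) → ℕ) (β : Fin (n+1) → ℕ) : ℕ :=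
  Finset.univ.lcm fun j => r j / Nat.gcd (r j) (β j)

/-- `A_β`. -/
def Aset (r : Fin (n+1) → ℕ) (β : Fin (n+1) → ℕ) : Finset (Fin (n+1) → ℕ) :=
  (Fintype.piFinset fun j => Finset.Icc 1 (r j)).filter
    fun ω => (∑ j, (r (Fin.last n) / r j) * ω j * β j) % r (Fin.last n) = 0

/-- `A_{β,p}`. -/
def Apset (r : Fin (n+1) → ℕ) (p : ℕ) (β : Fin (n+1) → ℕ) : Finset (Fin (n+1) → ℕ) :=
  (Fintype.piFinset fun j => Finset.Icc 1 (p ^ padicValNat p (r j))).filter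
    fun ω => (∑ j, p ^ (padicValNat p (r (Fin.last n)) - padicValNat p (r j)) * ω j * β j)
      % p ^ padicValNat p (r (Fin.last n)) = 0

/-- the finite set `𝒮` of vectors `s` with `s j ∣ r j`. -/
def Sfin (r : Fin (n+1) → ℕ) : Finset (Fin (n+1) → ℕ) :=
  Fintype.piFinset fun j => (r j).divisors

/-- `ℓ(s) = lcm(s_1, …, s_n)`. -/
def ells (s : Fin (n+1) → ℕ) : ℕ := Finset.univ.lcm s

/-- the finite set `Ω_s`. -/
def Omfin (s : Fin (n+1) → ℕ) : Finset (Fin (n+1) → ℕ) :=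
  Fintype.piFinset fun j => (Finset.Icc 1 (s j)).filter fun w => Nat.Coprime w (s j)

/-- `χ_m = χ^{(q-1)/m}`. -/
noncomputable def chim (χ : MulChar Fq ℂ) (m : ℕ) : MulChar Fq ℂ :=
  χ ^ ((Fintype.card Fq - 1) / m)

/-- the constant `c_s^ω`. -/
def csw (c : Fin (n+1) → Fq) (s ω : Fin (n+1) → ℕ) : Fq :=
  ∏ j, c j ^ ((ells s / s j * ω j) % ells s)

/-- the exponent of `f_α` in `F_s^ω`. -/
def expo (s ω α : Fin (n+1) → ℕ) : ℕ :=
  (∑ j, (ells s / s j) * ω j * α j) % ells s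

/-- the polynomial `F_s^ω`. -/
noncomputable def Fsw (r : Fin (n+1) → ℕ) (c : Fin (n+1) → Fq)
    (f : Rty r → Polynomial Fq) (s ω : Fin (n+1) → ℕ) : Polynomial Fq :=
  Polynomial.C (csw c s ω) * ∏ α : Rty r, f α ^ expo s ω (α : Fin (n+1) → ℕ)

/-- `d_j = ∑_{α ∈ R} α_j · deg f_α`. -/
noncomputable def dJ (r : Fin (n+1) → ℕ) (f : Rty r → Polynomial Fq) (j : Fin (n+1)) : ℕ :=
  ∑ α : Rty r, (α : Fin (n+1) → ℕ) j * (f α).natDegree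

/-- evaluation of `F_s^ω` at a point of `ℙ¹(𝔽_q)`; `none` is the point at infinity. -/
noncomputable def FswVal (r : Fin (n+1) → ℕ) (c : Fin (n+1) → Fq)
    (f : Rty r → Polynomial Fq) (s ω : Fin (n+1) → ℕ) : Option Fq → Fq
  | some x => (Fsw r c f s ω).eval x
  | none => if (∑ j, (ells s / s j) * ω j * dJ r f j) % ells s = 0 then csw c s ω else 0

/-- `d_j` associated to a degree vector `d`. -/
def dSum (r : Fin (n+1) → ℕ) (d : Rty r → ℕ) (j : Fin (n+1)) : ℕ :=
  ∑ α : Rty r, (α : Fin (n+1) → ℕ) j * d α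

/-- membership in `F_d`. -/
def MemFd (r : Fin (n+1) → ℕ) (d : Rty r → ℕ) (f : Rty r → Polynomial Fq) : Prop :=
  (∀ α, (f α).Monic ∧ Squarefree (f α) ∧ (f α).natDegree = d α) ∧
  ∀ α β : Rty r, α ≠ β → IsCoprime (f α) (f β)

/-- membership in `F^β_d`. -/
def MemFdB (r : Fin (n+1) → ℕ) (β : Rty r) (d : Rty r → ℕ) (f : Rty r → Polynomial Fq) : Prop :=
  (∀ α, (f α).Monic ∧ Squarefree (f α)) ∧
  ((f β).natDegree + 1 = d β) ∧ (∀ α, α ≠ β → (f α).natDegree = d α) ∧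
  ∀ α γ : Rty r, α ≠ γ → IsCoprime (f α) (f γ)

/-- membership in `F_{[d]}`. -/
def MemFdBr (r : Fin (n+1) → ℕ) (d : Rty r → ℕ) (f : Rty r → Polynomial Fq) : Prop :=
  MemFd r d f ∨ ∃ β : Rty r, MemFdB r β d f

/-- membership in `F̂_{[d]}`. -/
def MemFhat (r : Fin (n+1) → ℕ) (d : Rty r → ℕ)
    (c : Fin (n+1) → Fq) (f : Rty r → Polynomial Fq) : Prop :=
  (∀ j, c j ≠ 0) ∧ MemFdBr r d f

/-- `ζ_q(2)`. -/
noncomputable def zetaq2 (q : ℕ) : ℝ := ((1 - ((q : ℝ) ^ 2)⁻¹) * (1 - (q : ℝ)⁻¹))⁻¹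

/-- `L_N`. -/
noncomputable def Lconst (Fq : Type) [Field Fq] [Fintype Fq] (N : ℕ) : ℝ :=
  ∏ j ∈ Finset.Icc 1 N,
    ∏' P : {P : Polynomial Fq // P.Monic ∧ Irreducible P},
      (1 - (j : ℝ) / (((Fintype.card Fq : ℝ) ^ (P : Polynomial Fq).natDegree - 1) *
        ((Fintype.card Fq : ℝ) ^ (P : Polynomial Fq).natDegree + (j : ℝ))))

/-- an admissible family of values `ε_{s,ω}`. -/
def Admissible (r : Fin (n+1) → ℕ) (χ : MulChar Fq ℂ)
    (ε : (Fin (n+1) → ℕ) → (Fin (n+1) → ℕ) → ℂ) : Prop :=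
  ∃ d : Rty r → ℕ, (∀ j, r j ∣ dSum r d j) ∧
    ∃ c f, MemFhat r d c f ∧ ∃ x : Option Fq,
      ∀ s ∈ Sfin r, ∀ ω ∈ Omfin s, ε s ω = chim χ (ells s) (FswVal r c f s ω x)

/-- a `[β]`-admissible family of values `ε_{s,ω}`. -/
def BetaAdmissible (r : Fin (n+1) → ℕ) (χ : MulChar Fq ℂ) (β : Fin (n+1) → ℕ)
    (ε : (Fin (n+1) → ℕ) → (Fin (n+1) → ℕ) → ℂ) : Prop :=
  Admissible r χ ε ∧
    ∀ s ∈ Sfin r, ∀ ω ∈ Omfin s,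
      (ε s ω = 0 ↔ (fun j => (r j / s j) * ω j) ∉ Aset r β)

end Setup


lemma MulChar.map_pow_mod {R R' : Type*} [CommMonoid R] [CommMonoidWithZero R']
    {ψ : MulChar R R'} {m : ℕ} (hψ : ψ ^ m = 1) {z : R} (hz : IsUnit z) (e : ℕ) :
    ψ (z ^ (e % m)) = ψ z ^ e := by
  obtain ⟨u, rfl⟩ := hz
  have hu : ψ u ^ m = 1 := by rw [← MulChar.pow_apply_coe, hψ, MulChar.one_apply_coe]
  rw [map_pow]
  conv_rhs => rw [← Nat.mod_add_div e m, pow_add, pow_mul, hu, one_pow, mul_one]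

section Exponents

variable {n : ℕ}

lemma ells_mulSingle (j : Fin (n+1)) (m : ℕ) : ells (Pi.mulSingle j m) = m := by
  refine Nat.dvd_antisymm (lcm_dvd fun k _ => ?_) ?_
  · rw [Pi.mulSingle_apply]
    split_ifs <;> simp
  · have h := dvd_lcm (s := univ) (f := Pi.mulSingle j m) (mem_univ j)
    rwa [Pi.mulSingle_eq_same] at h

lemma expo_mulSingle {m : ℕ} (hm : 0 < m) (j : Fin (n+1)) (ω v : Fin (n+1) → ℕ) :
    expo (Pi.mulSingle j m) ω v = ω j * v j % m := by
  have hsum : ∑ k, m / (Pi.mulSingle j m : Fin (n+1) → ℕ) k * ω k * v k =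
      ω j * v j + m * ∑ k ∈ univ.erase j, ω k * v k := by
    rw [← add_sum_erase _ _ (mem_univ j), mul_sum, Pi.mulSingle_eq_same, Nat.div_self hm, one_mul]
    refine congrArg _ (sum_congr rfl fun k hk => ?_)
    rw [Pi.mulSingle_eq_of_ne (ne_of_mem_erase hk), Nat.div_one, mul_assoc]
  rw [expo, ells_mulSingle, hsum, Nat.add_mul_mod_self_left]

lemma expo_eq_zero_of_dvd {s v : Fin (n+1) → ℕ} (h : ∀ j, s j ∣ v j) (ω : Fin (n+1) → ℕ) :
    expo s ω v = 0 :=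
  Nat.mod_eq_zero_of_dvd <| dvd_sum fun j _ =>
    calc ells s = ells s / s j * s j := (Nat.div_mul_cancel (dvd_lcm (mem_univ j))).symm
      _ ∣ ells s / s j * ω j * v j := by
        rw [mul_assoc, mul_comm (ω j)]
        exact mul_dvd_mul_left _ (dvd_mul_of_dvd_left (h j) _)

lemma expo_eq_zero_of_expo_mulSingle_eq_zero {s v : Fin (n+1) → ℕ} (hs : ∀ j, 0 < s j)
    (h : ∀ j, expo (Pi.mulSingle j (s j)) (fun _ => 1) v = 0)
    {s' : Fin (n+1) → ℕ} (hs' : ∀ j, s' j ∣ s j) (ω' : Fin (n+1) → ℕ) : expo s' ω' v = 0 :=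
  expo_eq_zero_of_dvd (fun j => (hs' j).trans <| Nat.dvd_of_mod_eq_zero <| by
    simpa [expo_mulSingle (hs j)] using h j) ω'

lemma ells_dvd_of_mem_Sfin {r s : Fin (n+1) → ℕ} (hs : s ∈ Sfin r)
    (hchain : ∀ i j : Fin (n+1), i ≤ j → r i ∣ r j) : ells s ∣ r (Fin.last n) :=
  lcm_dvd fun j _ => (Nat.dvd_of_mem_divisors (Fintype.mem_piFinset.mp hs j)).trans
    (hchain j _ (Fin.le_last j))

end Exponents

section Characters

variable {Fq : Type} [Field Fq] {n : ℕ}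

lemma csw_mulSingle {m : ℕ} (hm : 0 < m) (c : Fin (n+1) → Fq) (j : Fin (n+1))
    (ω : Fin (n+1) → ℕ) : csw c (Pi.mulSingle j m) ω = c j ^ (ω j % m) := by
  rw [csw, ells_mulSingle, prod_eq_single j (fun k _ hk => ?_) (by simp),
    Pi.mulSingle_eq_same, Nat.div_self hm, one_mul]
  rw [Pi.mulSingle_eq_of_ne hk, Nat.div_one, Nat.mul_mod_right, pow_zero]

variable [Fintype Fq]

lemma chim_pow_self (χ : MulChar Fq ℂ) {m : ℕ} (hm : m ∣ Fintype.card Fq - 1) :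
    chim χ m ^ m = 1 := by
  classical
  rw [chim, ← pow_mul, Nat.div_mul_cancel hm, ← Fintype.card_units, χ.pow_card_eq_one]

lemma chim_pow_div (χ : MulChar Fq ℂ) {l m : ℕ} (hml : m ∣ l) (hl : l ∣ Fintype.card Fq - 1) :
    chim χ l ^ (l / m) = chim χ m := by
  have hl0 : 0 < l := Nat.pos_of_dvd_of_pos hl (Nat.sub_pos_of_lt Fintype.one_lt_card)
  rw [chim, chim, ← pow_mul, Nat.div_mul_div_comm hl hml, mul_comm l m,
    Nat.mul_div_mul_right _ _ hl0]

lemma chim_csw_mulSingle_mul_prod (χ : MulChar Fq ℂ) {m : ℕ} (hm : m ∣ Fintype.card Fq - 1)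
    {c : Fin (n+1) → Fq} {j : Fin (n+1)} (hc : c j ≠ 0) {ι : Type*} [Fintype ι]
    (a : ι → Fin (n+1) → ℕ) {y : ι → Fq} (hy : ∀ i, y i ≠ 0) (ω : Fin (n+1) → ℕ) :
    chim χ m (csw c (Pi.mulSingle j m) ω * ∏ i, y i ^ expo (Pi.mulSingle j m) ω (a i)) =
      chim χ m (c j * ∏ i, y i ^ a i j) ^ ω j := by
  have hm0 : 0 < m := Nat.pos_of_dvd_of_pos hm (Nat.sub_pos_of_lt Fintype.one_lt_card)
  have hψ := chim_pow_self χ hm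
  simp only [csw_mulSingle hm0, expo_mulSingle hm0, map_mul, map_prod, mul_pow, ← prod_pow,
    MulChar.map_pow_mod hψ hc.isUnit, MulChar.map_pow_mod hψ (hy _).isUnit, map_pow, ← pow_mul,
    mul_comm (ω j)]

lemma chim_ells_csw_mul_prod (χ : MulChar Fq ℂ) {s : Fin (n+1) → ℕ}
    (hs : ells s ∣ Fintype.card Fq - 1) {c : Fin (n+1) → Fq} (hc : ∀ j, c j ≠ 0)
    {ι : Type*} [Fintype ι] (a : ι → Fin (n+1) → ℕ) {y : ι → Fq} (hy : ∀ i, y i ≠ 0)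
    (ω : Fin (n+1) → ℕ) :
    chim χ (ells s) (csw c s ω * ∏ i, y i ^ expo s ω (a i)) =
      ∏ j, chim χ (s j) (c j * ∏ i, y i ^ a i j) ^ ω j := by
  have hℓ : 0 < ells s := Nat.pos_of_dvd_of_pos hs (Nat.sub_pos_of_lt Fintype.one_lt_card)
  have hψ := chim_pow_self χ hs
  have hchim : ∀ j z, chim χ (s j) z = chim χ (ells s) z ^ (ells s / s j) := fun j z => by
    have hsj : s j ∣ ells s := dvd_lcm (mem_univ j)
    rw [← chim_pow_div χ hsj hs, MulChar.pow_apply' _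
      (Nat.div_pos (Nat.le_of_dvd hℓ hsj) (Nat.pos_of_dvd_of_pos hsj hℓ)).ne']
  simp only [hchim, csw, expo, map_mul, map_prod, MulChar.map_pow_mod hψ (hc _).isUnit,
    MulChar.map_pow_mod hψ (hy _).isUnit, mul_pow, ← prod_pow, map_pow, ← pow_mul,
    ← prod_pow_eq_pow_sum, prod_mul_distrib]
  rw [prod_comm]
  refine congrArg _ (prod_congr rfl fun j _ => prod_congr rfl fun i _ => ?_)
  ring

end Characters

section Evaluation

variable {Fq : Type} [Field Fq] {n : ℕ} {r : Fin (n+1) → ℕ} {c : Fin (n+1) → Fq}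
  {f : Rty r → Fq[X]}

lemma FswVal_none (s ω : Fin (n+1) → ℕ) :
    FswVal r c f s ω none = if expo s ω (dJ r f) = 0 then csw c s ω else 0 := rfl

lemma FswVal_some (s ω : Fin (n+1) → ℕ) (a : Fq) :
    FswVal r c f s ω (some a) = csw c s ω * ∏ α, (f α).eval a ^ expo s ω ↑α := by
  simp only [FswVal, Fsw, eval_mul, eval_C, eval_prod, eval_pow]

/-- At a finite point `y α` is `f_α(x)`, replaced by `1` where it vanishes; at `∞` all `y α = 1`. -/
lemma exists_FswVal_eq_csw_mul_prod {s : Fin (n+1) → ℕ} (hs : ∀ j, 0 < s j) {x : Option Fq}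
    (hx : ∀ j, FswVal r c f (Pi.mulSingle j (s j)) (fun _ => 1) x ≠ 0) :
    ∃ y : Rty r → Fq, (∀ α, y α ≠ 0) ∧ ∀ s' ω' : Fin (n+1) → ℕ, (∀ j, s' j ∣ s j) →
      FswVal r c f s' ω' x = csw c s' ω' * ∏ α, y α ^ expo s' ω' ↑α := by
  cases x with
  | none =>
    have hd : ∀ j, expo (Pi.mulSingle j (s j)) (fun _ => 1) (dJ r f) = 0 := fun j => by
      by_contra h
      exact hx j (if_neg h)
    refine ⟨1, fun _ => one_ne_zero, fun s' ω' hs' => ?_⟩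
    rw [FswVal_none, if_pos (expo_eq_zero_of_expo_mulSingle_eq_zero hs hd hs' ω')]
    simp
  | some a =>
    classical
    have hzero : ∀ α, (f α).eval a = 0 → ∀ j, expo (Pi.mulSingle j (s j)) (fun _ => 1) ↑α = 0 :=
      fun α hα j => by
        by_contra h
        refine hx j ?_
        rw [FswVal_some]
        exact mul_eq_zero_of_right _ (prod_eq_zero (mem_univ α) (by rw [hα, zero_pow h]))
    refine ⟨fun α => if (f α).eval a = 0 then 1 else (f α).eval a, fun α => ?_,
      fun s' ω' hs' => ?_⟩
    · dsimp only
      split_ifs with h <;> simp [h]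
    · rw [FswVal_some]
      refine congrArg _ (prod_congr rfl fun α _ => ?_)
      dsimp only
      split_ifs with h
      · rw [h, expo_eq_zero_of_expo_mulSingle_eq_zero hs (hzero α h) hs' ω', pow_zero, pow_zero]
      · rfl

end Evaluation

section Thms

variable {Fq : Type} [Field Fq] [Fintype Fq] [DecidableEq Fq] {n : ℕ}

theorem stmt_11_general (r : Fin (n+1) → ℕ)
    (hchain : ∀ i j : Fin (n+1), i ≤ j → r i ∣ r j)
    (hq : Fintype.card Fq ≡ 1 [MOD r (Fin.last n)])
    (χ : MulChar Fq ℂ)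
    (s ω : Fin (n+1) → ℕ) (hs : s ∈ Sfin r)
    (σ : Fin (n+1) → Fin (n+1) → ℕ)
    (hσ : ∀ j k, σ j k = if k = j then s j else 1)
    (d : Rty r → ℕ)
    (c : Fin (n+1) → Fq) (f : Rty r → Polynomial Fq) (hcf : MemFhat r d c f)
    (x : Option Fq)
    (hnz : ∀ j, chim χ (s j) (FswVal r c f (σ j) (fun _ => 1) x) ≠ 0) :
    chim χ (ells s) (FswVal r c f s ω x) =
      ∏ j, (chim χ (s j) (FswVal r c f (σ j) (fun _ => 1) x)) ^ (ω j) := by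
  obtain rfl : σ = fun j => Pi.mulSingle j (s j) :=
    funext₂ fun j k => (hσ j k).trans (Pi.mulSingle_apply j (s j) k).symm
  have hℓ : ells s ∣ Fintype.card Fq - 1 :=
    (ells_dvd_of_mem_Sfin hs hchain).trans ((Nat.modEq_iff_dvd' Fintype.card_pos).mp hq.symm)
  have hs0 : ∀ j, 0 < s j := fun j => Nat.pos_of_mem_divisors (Fintype.mem_piFinset.mp hs j)
  obtain ⟨y, hy0, hy⟩ :=
    exists_FswVal_eq_csw_mul_prod hs0 fun j h => hnz j (by rw [h, MulChar.map_zero])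
  have hσs : ∀ j k, (Pi.mulSingle j (s j) : Fin (n+1) → ℕ) k ∣ s k := fun j k => by
    rw [Pi.mulSingle_apply]
    split_ifs with h
    · rw [h]
    · exact one_dvd _
  calc chim χ (ells s) (FswVal r c f s ω x)
      = chim χ (ells s) (csw c s ω * ∏ α, y α ^ expo s ω ↑α) := by
        rw [hy s ω fun _ => dvd_rfl]
    _ = ∏ j, chim χ (s j) (c j * ∏ α, y α ^ (α : Fin (n+1) → ℕ) j) ^ ω j :=
        chim_ells_csw_mul_prod χ hℓ hcf.1 _ hy0 ω
    _ = _ := prod_congr rfl fun j _ => by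
        rw [hy _ _ (hσs j), chim_csw_mulSingle_mul_prod χ ((dvd_lcm (mem_univ j)).trans hℓ)
          (hcf.1 j) _ hy0, pow_one]

theorem stmt_11 (r : Fin (n+1) → ℕ) (hr : ∀ j, 0 < r j)
    (hchain : ∀ i j : Fin (n+1), i ≤ j → r i ∣ r j)
    (hq : Fintype.card Fq ≡ 1 [MOD r (Fin.last n)])
    (χ : MulChar Fq ℂ) (hχ : orderOf χ = Fintype.card Fq - 1)
    (s ω : Fin (n+1) → ℕ) (hs : s ∈ Sfin r) (hω : ω ∈ Omfin s)
    (σ : Fin (n+1) → Fin (n+1) → ℕ)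
    (hσ : ∀ j k, σ j k = if k = j then s j else 1)
    (d : Rty r → ℕ) (hd : ∀ j, r j ∣ dSum r d j)
    (c : Fin (n+1) → Fq) (f : Rty r → Polynomial Fq) (hcf : MemFhat r d c f)
    (x : Option Fq)
    (hnz : ∀ j, chim χ (s j) (FswVal r c f (σ j) (fun _ => 1) x) ≠ 0) :
    chim χ (ells s) (FswVal r c f s ω x) =
      ∏ j, (chim χ (s j) (FswVal r c f (σ j) (fun _ => 1) x)) ^ (ω j) :=
  stmt_11_general r hchain hq χ s ω hs σ hσ d c f hcf x hnz

end Thms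
end

section
/- Let p be a prime dividing r_n and let β, β' ∈ R'. If β ∼_p β', then v_p(gcd(β_j, r_j)) = v_p(gcd(β'_j, r_j)) for all 1 ≤ j ≤ n, with the convention gcd(0, r_j) = r_j. -/
/-!
Fix `j` and `k ≤ v_p(r_j)`, and test `A_{β,p}` against the vector `ω` with `ω_j = p^(v_p(r_j) - k)`
and `ω_i = p^(v_p(r_i))` for `i ≠ j`. Every summand with `i ≠ j` is then divisible by `p^(v_p(r_n))`,
so `ω ∈ A_{β,p}` exactly when `p^k ∣ β_j`. Hence `β ∼_p β'` forces `p^k ∣ β_j ↔ p^k ∣ β'_j` for all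
`k ≤ v_p(r_j)`, and these divisibilities determine `v_p(gcd(β_j, r_j))`.
-/

open Finset

theorem padicValNat_gcd_eq_of_forall_pow_dvd_iff {p m b b' : ℕ} [Fact p.Prime] (hm : m ≠ 0)
    (h : ∀ k ≤ padicValNat p m, p ^ k ∣ b ↔ p ^ k ∣ b') :
    padicValNat p (Nat.gcd b m) = padicValNat p (Nat.gcd b' m) := by
  refine eq_of_forall_le_iff fun k => ?_
  rw [← padicValNat_dvd_iff_le (Nat.gcd_ne_zero_right hm),
    ← padicValNat_dvd_iff_le (Nat.gcd_ne_zero_right hm), Nat.dvd_gcd_iff, Nat.dvd_gcd_iff]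
  constructor
  · rintro ⟨hb, hkm⟩
    exact ⟨(h k ((padicValNat_dvd_iff_le hm).mp hkm)).mp hb, hkm⟩
  · rintro ⟨hb', hkm⟩
    exact ⟨(h k ((padicValNat_dvd_iff_le hm).mp hkm)).mpr hb', hkm⟩

section Probe

variable {n : ℕ} (r : Fin (n+1) → ℕ) (p : ℕ)

def probe (j : Fin (n+1)) (k : ℕ) : Fin (n+1) → ℕ :=
  Function.update (fun i => p ^ padicValNat p (r i)) j (p ^ (padicValNat p (r j) - k))

theorem probe_mem_piFinset (hp : 0 < p) (j : Fin (n+1)) (k : ℕ) :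
    probe r p j k ∈ Fintype.piFinset fun i => Icc 1 (p ^ padicValNat p (r i)) := by
  rw [Fintype.mem_piFinset]
  intro i
  rw [mem_Icc]
  rcases eq_or_ne i j with rfl | hij
  · rw [probe, Function.update_self]
    exact ⟨Nat.one_le_pow _ _ hp, Nat.pow_le_pow_right hp (Nat.sub_le _ _)⟩
  · rw [probe, Function.update_of_ne hij]
    exact ⟨Nat.one_le_pow _ _ hp, le_rfl⟩

theorem sum_probe_mul {M : ℕ} (hM : ∀ i, padicValNat p (r i) ≤ M) (β : Fin (n+1) → ℕ)
    (j : Fin (n+1)) {k : ℕ} (hk : k ≤ padicValNat p (r j)) :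
    ∑ i, p ^ (M - padicValNat p (r i)) * probe r p j k i * β i
      = p ^ (M - k) * β j + p ^ M * ∑ i ∈ univ.erase j, β i := by
  rw [← add_sum_erase _ _ (mem_univ j), mul_sum, probe, Function.update_self, ← pow_add,
    Nat.sub_add_sub_cancel (hM j) hk]
  refine congrArg _ (sum_congr rfl fun i hi => ?_)
  rw [Function.update_of_ne (ne_of_mem_erase hi), ← pow_add, Nat.sub_add_cancel (hM i)]

theorem probe_mem_Apset_iff (hp : 0 < p)
    (hM : ∀ i, padicValNat p (r i) ≤ padicValNat p (r (Fin.last n))) (β : Fin (n+1) → ℕ)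
    (j : Fin (n+1)) {k : ℕ} (hk : k ≤ padicValNat p (r j)) :
    probe r p j k ∈ Apset r p β ↔ p ^ k ∣ β j := by
  set M := padicValNat p (r (Fin.last n))
  have hpM : p ^ M = p ^ (M - k) * p ^ k := by rw [← pow_add, Nat.sub_add_cancel (hk.trans (hM j))]
  rw [Apset, mem_filter, and_iff_right (probe_mem_piFinset r p hp j k), sum_probe_mul r p hM β j hk,
    Nat.add_mul_mod_self_left, ← Nat.dvd_iff_mod_eq_zero, hpM,
    mul_dvd_mul_iff_left (pow_ne_zero _ hp.ne')]

end Probe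

theorem stmt_12_general (r : Fin (n+1) → ℕ) (hr : ∀ j, 0 < r j)
    (hchain : ∀ i j : Fin (n+1), i ≤ j → r i ∣ r j)
    (p : ℕ) (hp : p.Prime)
    (β β' : Fin (n+1) → ℕ)
    (hsim : Apset r p β = Apset r p β') :
    ∀ j, padicValNat p (Nat.gcd (β j) (r j)) = padicValNat p (Nat.gcd (β' j) (r j)) := by
  have : Fact p.Prime := ⟨hp⟩
  have hM : ∀ i, padicValNat p (r i) ≤ padicValNat p (r (Fin.last n)) := fun i =>
    (padicValNat_dvd_iff_le (hr _).ne').mp <|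
      pow_padicValNat_dvd.trans (hchain i _ (Fin.le_last i))
  intro j
  refine padicValNat_gcd_eq_of_forall_pow_dvd_iff (hr j).ne' fun k hk => ?_
  rw [← probe_mem_Apset_iff r p hp.pos hM β j hk, ← probe_mem_Apset_iff r p hp.pos hM β' j hk, hsim]

theorem stmt_12 (r : Fin (n+1) → ℕ) (hr : ∀ j, 0 < r j)
    (hchain : ∀ i j : Fin (n+1), i ≤ j → r i ∣ r j)
    (p : ℕ) (hp : p.Prime) (hpr : p ∣ r (Fin.last n))
    (β β' : Fin (n+1) → ℕ) (hβ : β ∈ Rfin' r) (hβ' : β' ∈ Rfin' r)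
    (hsim : Apset r p β = Apset r p β') :
    ∀ j, padicValNat p (Nat.gcd (β j) (r j)) = padicValNat p (Nat.gcd (β' j) (r j)) :=
  stmt_12_general r hr hchain p hp β β' hsim
end

section
/- Let p be a prime dividing r_n and let β, β' ∈ R'. Then β ∼_p β' if and only if there exists an integer m with 1 ≤ m ≤ p^{v_p(e(β))} and gcd(m, p) = 1 such that β'_j ≡ m·β_j (mod p^{v_p(r_j)}) for all 1 ≤ j ≤ n. -/
/-
Write `a_j = v_p(r_j)` and `A = v_p(r_n)`. The condition defining `A_{β,p}` says that `ω` lies in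
the kernel of the `ℤ/p^A`-valued linear form with coefficients `X_j = p^(A - a_j) β_j`, and the
box `∏ {1, …, p^(a_j)}` meets every residue class of `∏ ℤ/p^(a_j)`; so `β ∼_p β'` means that the
two forms have the same kernel. In `ℤ/p^A` every element is `p^v` times a unit, so some `X_k`
divides all the others, and two elements with the same annihilator are associates; hence equal
kernels force `X' = u X` for a unit `u`, i.e. `β'_j ≡ u β_j (mod p^(a_j))`. Finally
`p^(a_j) ∣ e(β) β_j`, so only `u` modulo `p^(v_p(e(β)))` matters.
-/

open Finset

theorem Nat.exists_mem_Icc_modEq {N : ℕ} (hN : 0 < N) (x : ℕ) :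
    ∃ ω ∈ Finset.Icc 1 N, ω ≡ x [MOD N] := by
  refine ⟨(x + N - 1) % N + 1, Finset.mem_Icc.2 ⟨by omega, Nat.mod_lt _ hN⟩, ?_⟩
  calc (x + N - 1) % N + 1 ≡ x + N - 1 + 1 [MOD N] := (Nat.mod_modEq _ _).add_right 1
    _ = x + N := by omega
    _ ≡ x [MOD N] := Nat.add_modEq_right

theorem Nat.exists_coprime_mem_Icc_modEq {p t x : ℕ} (hp : p.Prime) (hx : x.Coprime (p ^ t)) :
    ∃ m, 1 ≤ m ∧ m ≤ p ^ t ∧ m.Coprime p ∧ m ≡ x [MOD p ^ t] := by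
  obtain ⟨m, hm, hmx⟩ := Nat.exists_mem_Icc_modEq (pow_pos hp.pos t) x
  rw [Finset.mem_Icc] at hm
  refine ⟨m, hm.1, hm.2, ?_, hmx⟩
  rcases t.eq_zero_or_pos with rfl | ht
  · rw [show m = 1 by simp at hm; omega]
    exact Nat.coprime_one_left p
  · rw [← Nat.coprime_pow_right_iff ht, Nat.Coprime, hmx.gcd_eq]
    exact hx

theorem Nat.pow_dvd_pow_padicValNat_mul {p a x y : ℕ} [Fact p.Prime] (hx : x ≠ 0)
    (h : p ^ a ∣ x * y) : p ^ a ∣ p ^ padicValNat p x * y := by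
  rcases eq_or_ne y 0 with rfl | hy
  · simp
  have hpv : p ^ padicValNat p x ≠ 0 := pow_ne_zero _ (Fact.out : p.Prime).ne_zero
  rw [padicValNat_dvd_iff_le (mul_ne_zero hx hy), padicValNat.mul hx hy] at h
  rwa [padicValNat_dvd_iff_le (mul_ne_zero hpv hy), padicValNat.mul hpv hy, padicValNat.prime_pow]

theorem dotProduct_eq_zero_iff_of_eq_unit_mul {ι R : Type*} [Fintype ι] [CommRing R]
    {X X' : ι → R} (u : Rˣ) (hu : ∀ i, X' i = u * X i) (z : ι → R) :
    z ⬝ᵥ X = 0 ↔ z ⬝ᵥ X' = 0 := by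
  rw [show X' = (u : R) • X from funext hu, dotProduct_smul, smul_eq_mul,
    u.isUnit.mul_right_eq_zero]

namespace ZMod

variable {p a : ℕ} [hp : Fact p.Prime]

theorem prime_pow_eq_zero_iff {k : ℕ} : (p : ZMod (p ^ a)) ^ k = 0 ↔ a ≤ k := by
  rw [← Nat.cast_pow, ZMod.natCast_eq_zero_iff, Nat.pow_dvd_pow_iff_le_right hp.out.one_lt]

theorem exists_eq_prime_pow_mul_unit (x : ZMod (p ^ a)) :
    ∃ v ≤ a, ∃ w : (ZMod (p ^ a))ˣ, x = (p : ZMod (p ^ a)) ^ v * w := by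
  rcases eq_or_ne x 0 with rfl | hx
  · exact ⟨a, le_rfl, 1, by rw [Units.val_one, mul_one, eq_comm, prime_pow_eq_zero_iff]⟩
  have hval : x.val ≠ 0 := (ZMod.val_ne_zero x).2 hx
  set v := x.val.factorization p
  have hcop : (x.val / p ^ v).Coprime (p ^ a) :=
    ((Nat.coprime_ordCompl hp.out hval).pow_left a).symm
  refine ⟨v, ?_, ZMod.unitOfCoprime _ hcop, ?_⟩
  · have : p ^ v < p ^ a := (Nat.le_of_dvd (Nat.pos_of_ne_zero hval)
      (Nat.ordProj_dvd _ _)).trans_lt (ZMod.val_lt x)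
    exact ((Nat.pow_lt_pow_iff_right hp.out.one_lt).1 this).le
  · conv_lhs => rw [← ZMod.natCast_zmod_val x, ← Nat.ordProj_mul_ordCompl_eq_self x.val p]
    push_cast
    rfl

theorem exists_unit_mul_of_mul_eq_zero_iff {x y : ZMod (p ^ a)}
    (h : ∀ c, c * x = 0 ↔ c * y = 0) : ∃ u : (ZMod (p ^ a))ˣ, y = u * x := by
  obtain ⟨v, hva, w, rfl⟩ := exists_eq_prime_pow_mul_unit x
  obtain ⟨v', hva', w', rfl⟩ := exists_eq_prime_pow_mul_unit y
  have hkill : ∀ k v (w : (ZMod (p ^ a))ˣ),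
      (p : ZMod (p ^ a)) ^ k * ((p : ZMod (p ^ a)) ^ v * w) = 0 ↔ a ≤ k + v := by
    intro k v w
    rw [← mul_assoc, ← pow_add, Units.mul_left_eq_zero, prime_pow_eq_zero_iff]
  have h₁ := h ((p : ZMod (p ^ a)) ^ (a - v))
  have h₂ := h ((p : ZMod (p ^ a)) ^ (a - v'))
  rw [hkill, hkill] at h₁ h₂
  obtain rfl : v = v' := by omega
  exact ⟨w' * w⁻¹, by
    rw [Units.val_mul]
    linear_combination -((p : ZMod (p ^ a)) ^ v * w') * Units.inv_mul w⟩

theorem exists_unit_mul_of_dotProduct_eq_zero_iff {ι : Type*} [Fintype ι] [DecidableEq ι]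
    {X X' : ι → ZMod (p ^ a)} (h : ∀ z, z ⬝ᵥ X = 0 ↔ z ⬝ᵥ X' = 0) :
    ∃ u : (ZMod (p ^ a))ˣ, ∀ i, X' i = u * X i := by
  cases isEmpty_or_nonempty ι
  · exact ⟨1, isEmptyElim⟩
  choose v _ w hw using fun i => exists_eq_prime_pow_mul_unit (X i)
  obtain ⟨k, -, hk⟩ := Finset.exists_min_image univ v univ_nonempty
  have hdvd : ∀ i, ∃ c, X i = c * X k := fun i =>
    ⟨(p : ZMod (p ^ a)) ^ (v i - v k) * w i * (w k)⁻¹, by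
      rw [hw i, hw k, ← pow_sub_mul_pow _ (hk i (mem_univ i))]
      linear_combination -((p : ZMod (p ^ a)) ^ (v i - v k) * (p : ZMod (p ^ a)) ^ v k * w i) *
        Units.inv_mul (w k)⟩
  obtain ⟨u, hu⟩ := exists_unit_mul_of_mul_eq_zero_iff fun c => by
    simpa only [single_dotProduct] using h (Pi.single k c)
  refine ⟨u, fun i => ?_⟩
  obtain ⟨c, hc⟩ := hdvd i
  have hc' : X' i = c * X' k := by
    have := (h (Pi.single i 1 - Pi.single k c)).1 (by
      rw [sub_dotProduct, single_dotProduct, single_dotProduct, hc, one_mul, sub_self])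
    rwa [sub_dotProduct, single_dotProduct, single_dotProduct, one_mul, sub_eq_zero] at this
  rw [hc', hu, hc]
  ring

end ZMod

section Character

variable {n : ℕ} (r : Fin (n+1) → ℕ) (p : ℕ)

def charCoeff (β : Fin (n+1) → ℕ) : Fin (n+1) → ZMod (p ^ padicValNat p (r (Fin.last n))) :=
  fun j => ((p ^ (padicValNat p (r (Fin.last n)) - padicValNat p (r j)) * β j : ℕ) : ZMod _)

theorem mem_Apset_iff (β ω : Fin (n+1) → ℕ) :
    ω ∈ Apset r p β ↔ (∀ j, ω j ∈ Icc 1 (p ^ padicValNat p (r j))) ∧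
      (fun j => (ω j : ZMod (p ^ padicValNat p (r (Fin.last n))))) ⬝ᵥ charCoeff r p β = 0 := by
  simp only [Apset, mem_filter, Fintype.mem_piFinset]
  refine and_congr_right fun _ => ?_
  rw [← Nat.dvd_iff_mod_eq_zero, ← ZMod.natCast_eq_zero_iff, Nat.cast_sum]
  refine Eq.congr_left (sum_congr rfl fun j _ => ?_)
  simp only [charCoeff]
  push_cast
  ring

variable {r p}

theorem charCoeff_eq_natCast_mul_iff {β β' : Fin (n+1) → ℕ} {j : Fin (n+1)}
    (ha : padicValNat p (r j) ≤ padicValNat p (r (Fin.last n))) (hp : p ≠ 0) (c : ℕ) :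
    charCoeff r p β' j = c * charCoeff r p β j ↔
      β' j ≡ c * β j [MOD p ^ padicValNat p (r j)] := by
  have hA : p ^ padicValNat p (r (Fin.last n)) =
      p ^ (padicValNat p (r (Fin.last n)) - padicValNat p (r j)) * p ^ padicValNat p (r j) := by
    rw [← pow_add, Nat.sub_add_cancel ha]
  rw [charCoeff, charCoeff, ← Nat.cast_mul, ZMod.natCast_eq_natCast_iff, hA, mul_left_comm]
  exact Nat.ModEq.mul_left_cancel_iff' (pow_ne_zero _ hp)

theorem natCast_mul_charCoeff_of_modEq {β : Fin (n+1) → ℕ} {j : Fin (n+1)} {x y : ℕ}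
    (ha : padicValNat p (r j) ≤ padicValNat p (r (Fin.last n)))
    (h : x ≡ y [MOD p ^ padicValNat p (r j)]) :
    (x : ZMod (p ^ padicValNat p (r (Fin.last n)))) * charCoeff r p β j =
      y * charCoeff r p β j := by
  have hA : p ^ padicValNat p (r (Fin.last n)) =
      p ^ padicValNat p (r j) * p ^ (padicValNat p (r (Fin.last n)) - padicValNat p (r j)) := by
    rw [← pow_add, Nat.add_sub_cancel' ha]
  rw [charCoeff, ← Nat.cast_mul, ← Nat.cast_mul, ZMod.natCast_eq_natCast_iff, hA, ← mul_assoc,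
    ← mul_assoc]
  exact (h.mul_right' _).mul_right _

theorem Apset_eq_iff [Fact p.Prime] {β β' : Fin (n+1) → ℕ}
    (ha : ∀ j, padicValNat p (r j) ≤ padicValNat p (r (Fin.last n))) :
    Apset r p β = Apset r p β' ↔
      ∀ z, z ⬝ᵥ charCoeff r p β = 0 ↔ z ⬝ᵥ charCoeff r p β' = 0 := by
  constructor
  · intro h z
    choose ω hω hωz using fun j =>
      Nat.exists_mem_Icc_modEq (pow_pos (Fact.out : p.Prime).pos (padicValNat p (r j))) (z j).val
    have hz : ∀ γ, z ⬝ᵥ charCoeff r p γ =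
        (fun j => (ω j : ZMod (p ^ padicValNat p (r (Fin.last n))))) ⬝ᵥ charCoeff r p γ :=
      fun γ => sum_congr rfl fun j _ => by
        rw [natCast_mul_charCoeff_of_modEq (ha j) (hωz j), ZMod.natCast_zmod_val]
    simpa only [mem_Apset_iff, hz, hω, true_and, implies_true] using Finset.ext_iff.1 h ω
  · intro h
    ext ω
    simp only [mem_Apset_iff, h]

end Character

section Exponent

variable {n : ℕ} {r : Fin (n+1) → ℕ}

theorem eOf_ne_zero (hr : ∀ j, 0 < r j) (β : Fin (n+1) → ℕ) : eOf r β ≠ 0 := by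
  rw [eOf, Ne, Finset.lcm_eq_zero_iff]
  rintro ⟨j, -, hj⟩
  exact (Nat.div_pos (Nat.gcd_le_left _ (hr j)) (Nat.gcd_pos_of_pos_left _ (hr j))).ne' hj

theorem eOf_dvd {N : ℕ} (h : ∀ j, r j ∣ N) (β : Fin (n+1) → ℕ) : eOf r β ∣ N :=
  Finset.lcm_dvd fun j _ => (Nat.div_dvd_of_dvd (Nat.gcd_dvd_left _ _)).trans (h j)

theorem dvd_eOf_mul (β : Fin (n+1) → ℕ) (j : Fin (n+1)) : r j ∣ eOf r β * β j := by
  calc r j ∣ Nat.lcm (r j) (β j) := Nat.dvd_lcm_left _ _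
    _ = r j / Nat.gcd (r j) (β j) * β j :=
      (Nat.div_mul_right_comm (Nat.gcd_dvd_left _ _) _).symm
    _ ∣ eOf r β * β j := Nat.mul_dvd_mul_right (Finset.dvd_lcm (Finset.mem_univ j)) _

theorem pow_padicValNat_dvd_pow_padicValNat_eOf_mul {p : ℕ} [Fact p.Prime]
    (hr : ∀ j, 0 < r j) (β : Fin (n+1) → ℕ) (j : Fin (n+1)) :
    p ^ padicValNat p (r j) ∣ p ^ padicValNat p (eOf r β) * β j :=
  Nat.pow_dvd_pow_padicValNat_mul (eOf_ne_zero hr β)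
    (pow_padicValNat_dvd.trans (dvd_eOf_mul β j))

end Exponent

theorem stmt_13_general (r : Fin (n+1) → ℕ) (hr : ∀ j, 0 < r j)
    (hchain : ∀ i j : Fin (n+1), i ≤ j → r i ∣ r j)
    (p : ℕ) (hp : p.Prime)
    (β β' : Fin (n+1) → ℕ) :
    Apset r p β = Apset r p β' ↔
      ∃ m : ℕ, 1 ≤ m ∧ m ≤ p ^ padicValNat p (eOf r β) ∧ Nat.Coprime m p ∧
        ∀ j, β' j ≡ m * β j [MOD p ^ padicValNat p (r j)] := by
  have := Fact.mk hp
  have hdvd : ∀ j, r j ∣ r (Fin.last n) := fun j => hchain j _ (Fin.le_last j)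
  have hle : ∀ {d}, d ∣ r (Fin.last n) → padicValNat p d ≤ padicValNat p (r (Fin.last n)) :=
    fun hd => (padicValNat_dvd_iff_le (hr _).ne').1 (pow_padicValNat_dvd.trans hd)
  rw [Apset_eq_iff fun j => hle (hdvd j)]
  constructor
  · intro h
    obtain ⟨u, hu⟩ := ZMod.exists_unit_mul_of_dotProduct_eq_zero_iff h
    obtain ⟨m, hm1, hmt, hmp, hmu⟩ := Nat.exists_coprime_mem_Icc_modEq hp
      ((ZMod.val_coe_unit_coprime u).coprime_dvd_right (pow_dvd_pow p (hle (eOf_dvd hdvd β))))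
    refine ⟨m, hm1, hmt, hmp, fun j => ?_⟩
    have hβ' := (charCoeff_eq_natCast_mul_iff (hle (hdvd j)) hp.ne_zero _).1
      (by rw [ZMod.natCast_zmod_val]; exact hu j)
    exact hβ'.trans ((hmu.symm.mul_right' (β j)).of_dvd
      (pow_padicValNat_dvd_pow_padicValNat_eOf_mul hr β j))
  · rintro ⟨m, -, -, hm, hmod⟩
    exact dotProduct_eq_zero_iff_of_eq_unit_mul (ZMod.unitOfCoprime m (hm.pow_right _))
      fun j => (charCoeff_eq_natCast_mul_iff (hle (hdvd j)) hp.ne_zero m).2 (hmod j)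

theorem stmt_13 (r : Fin (n+1) → ℕ) (hr : ∀ j, 0 < r j)
    (hchain : ∀ i j : Fin (n+1), i ≤ j → r i ∣ r j)
    (p : ℕ) (hp : p.Prime) (hpr : p ∣ r (Fin.last n))
    (β β' : Fin (n+1) → ℕ) (hβ : β ∈ Rfin' r) (hβ' : β' ∈ Rfin' r) :
    Apset r p β = Apset r p β' ↔
      ∃ m : ℕ, 1 ≤ m ∧ m ≤ p ^ padicValNat p (eOf r β) ∧ Nat.Coprime m p ∧
        ∀ j, β' j ≡ m * β j [MOD p ^ padicValNat p (r j)] :=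
  stmt_13_general r hr hchain p hp β β'
end

section
/- For every β ∈ R', the number of β' ∈ R' with β' ∼ β equals φ(e(β)), where φ is Euler's totient function. -/
open Finset

/-!
Write `G = ∏ⱼ ℤ/rⱼ` and `N = r_n`. Each `β` defines a homomorphism `χ_β : G → ℤ/N`,
`χ_β(ω) = ∑ⱼ (N/rⱼ) βⱼ ωⱼ`, and `A_β` is (the set of representatives of) its kernel; the map
`β ↦ χ_β` is injective on `R'`. The image of `χ_β` is a cyclic group of order `e(β)`, generated by
some `χ_β(g₀)`. A homomorphism `ψ` with `ker ψ = ker χ_β` is determined by `ψ(g₀)`, which has order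
`e(β)`; conversely every element `x` of order `e(β)` is `k • χ_β(g₀)` with `k • χ_β = χ_{kβ}` having
the same kernel. Hence the class of `β` is in bijection with the elements of order `e(β)` in `ℤ/N`,
of which there are `φ(e(β))`.
-/

section CyclicTarget

variable {G C : Type*} [AddCommGroup G] [AddCommGroup C]

theorem mem_zmultiples_of_addOrderOf_dvd [IsAddCyclic C] [Finite C] {x y : C}
    (h : addOrderOf x ∣ addOrderOf y) : x ∈ AddSubgroup.zmultiples y := by
  have hle : AddSubgroup.zmultiples y ≤ (nsmulAddMonoidHom (addOrderOf y) : C →+ C).ker :=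
    AddSubgroup.zmultiples_le_of_mem (addOrderOf_nsmul_eq_zero y)
  have heq := AddSubgroup.eq_of_le_of_card_ge hle (by
    rw [IsAddCyclic.card_nsmulAddMonoidHom_ker, Nat.card_zmultiples]
    exact Nat.gcd_le_right _ (addOrderOf_pos y))
  rw [heq]
  exact addOrderOf_dvd_iff_nsmul_eq_zero.mp h

theorem exists_forall_mem_zmultiples_apply [IsAddCyclic C] (φ : G →+ C) :
    ∃ g₀, ∀ g, φ g ∈ AddSubgroup.zmultiples (φ g₀) := by
  obtain ⟨c, hc⟩ := IsAddCyclic.exists_generator (α := C)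
  obtain ⟨k, hk⟩ := (AddSubgroup.le_zmultiples_iff c φ.range).mp fun x _ => hc x
  obtain ⟨g₀, hg₀⟩ : k • c ∈ φ.range := hk ▸ AddSubgroup.mem_zmultiples _
  exact ⟨g₀, fun g => hg₀ ▸ hk ▸ AddMonoidHom.mem_range.mpr ⟨g, rfl⟩⟩

theorem addOrderOf_apply_eq_of_ker_eq {φ ψ : G →+ C} (h : ψ.ker = φ.ker) (g : G) :
    addOrderOf (ψ g) = addOrderOf (φ g) := by
  refine addOrderOf_eq_addOrderOf_iff.mpr fun m => ?_
  simp only [← map_nsmul, ← AddMonoidHom.mem_ker, h]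

theorem addOrderOf_apply_dvd_iff {φ : G →+ C} {g₀ : G}
    (hg₀ : ∀ g, φ g ∈ AddSubgroup.zmultiples (φ g₀)) (m : ℕ) :
    addOrderOf (φ g₀) ∣ m ↔ m • φ = 0 := by
  refine addOrderOf_dvd_iff_nsmul_eq_zero.trans ⟨fun h => ?_, fun h => DFunLike.congr_fun h g₀⟩
  ext g
  obtain ⟨z, hz⟩ := hg₀ g
  simp [← hz, smul_comm m z, h]

theorem zsmul_apply_eq_of_ker_eq {φ ψ : G →+ C} (h : ψ.ker = φ.ker) {g g₀ : G} {z : ℤ}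
    (hz : z • φ g₀ = φ g) : z • ψ g₀ = ψ g := by
  have hK : g - z • g₀ ∈ φ.ker := by simp [hz]
  rw [← h, AddMonoidHom.mem_ker, map_sub, map_zsmul, sub_eq_zero] at hK
  exact hK.symm

theorem eq_of_ker_eq_of_apply_eq {φ ψ ψ' : G →+ C} {g₀ : G}
    (hg₀ : ∀ g, φ g ∈ AddSubgroup.zmultiples (φ g₀)) (hψ : ψ.ker = φ.ker) (hψ' : ψ'.ker = φ.ker)
    (h : ψ g₀ = ψ' g₀) : ψ = ψ' := by
  ext g
  obtain ⟨z, hz⟩ := hg₀ g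
  rw [← zsmul_apply_eq_of_ker_eq hψ hz, ← zsmul_apply_eq_of_ker_eq hψ' hz, h]

theorem exists_nsmul_ker_eq_apply_eq [IsAddCyclic C] [Finite C] {φ : G →+ C} {g₀ : G}
    (hg₀ : ∀ g, φ g ∈ AddSubgroup.zmultiples (φ g₀)) {x : C}
    (hx : addOrderOf x = addOrderOf (φ g₀)) : ∃ k : ℕ, (k • φ).ker = φ.ker ∧ (k • φ) g₀ = x := by
  obtain ⟨k, hk⟩ := mem_multiples_iff_mem_zmultiples.mpr (mem_zmultiples_of_addOrderOf_dvd hx.dvd)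
  obtain ⟨l, hl : l • x = φ g₀⟩ := mem_zmultiples_of_addOrderOf_dvd hx.symm.dvd
  refine ⟨k, le_antisymm (fun g hg => ?_) (fun g hg => ?_), hk⟩
  · obtain ⟨z, hz : z • φ g₀ = φ g⟩ := hg₀ g
    have hxz : z • x = 0 := by
      rw [AddMonoidHom.mem_ker, AddMonoidHom.nsmul_apply, ← hz] at hg
      rw [← hk, smul_comm, hg]
    rw [AddMonoidHom.mem_ker, ← hz, ← hl, smul_comm, hxz, smul_zero]
  · simp [AddMonoidHom.mem_ker.mp hg]

open Classical in
theorem card_filter_ker_eq {ι : Type*} [Fintype C] [IsAddCyclic C] (F : ι → G →+ C)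
    (s : Finset ι) (hF : Set.InjOn F s) {i₀ : ι}
    (hs : ∀ k : ℕ, ∃ i ∈ s, F i = k • F i₀) {g₀ : G}
    (hg₀ : ∀ g, F i₀ g ∈ AddSubgroup.zmultiples (F i₀ g₀)) :
    #{i ∈ s | (F i).ker = (F i₀).ker} = (addOrderOf (F i₀ g₀)).totient := by
  rw [← IsAddCyclic.card_addOrderOf_eq_totient addOrderOf_dvd_card]
  refine card_bij (fun i _ => F i g₀) (fun i hi => ?_) (fun i hi j hj hij => ?_) (fun x hx => ?_)
  · simp only [mem_filter] at hi
    simpa using addOrderOf_apply_eq_of_ker_eq hi.2 g₀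
  · simp only [mem_filter] at hi hj
    exact hF hi.1 hj.1 (eq_of_ker_eq_of_apply_eq hg₀ hi.2 hj.2 hij)
  · obtain ⟨k, hker, hkx⟩ := exists_nsmul_ker_eq_apply_eq hg₀ (mem_filter.mp hx).2
    obtain ⟨i, hi, hFi⟩ := hs k
    exact ⟨i, mem_filter.mpr ⟨hi, hFi ▸ hker⟩, hFi ▸ hkx⟩

end CyclicTarget

namespace ZMod

variable {a b : ℕ}

def mulDivHom (h : a ∣ b) : ZMod a →+ ZMod b :=
  ZMod.lift a ⟨(AddMonoidHom.mulLeft ((b / a : ℕ) : ZMod b)).comp (Int.castAddHom (ZMod b)), by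
    simp [← Nat.cast_mul, Nat.div_mul_cancel h]⟩

theorem mulDivHom_natCast (h : a ∣ b) (m : ℕ) : mulDivHom h m = ((b / a * m : ℕ) : ZMod b) := by
  rw [← Int.cast_natCast, mulDivHom, ZMod.lift_coe]
  simp

theorem mulDivHom_injective (h : a ∣ b) (hb : b ≠ 0) : Function.Injective (mulDivHom h) := by
  have : NeZero a := ⟨by rintro rfl; exact hb (Nat.eq_zero_of_zero_dvd h)⟩
  refine (injective_iff_map_eq_zero _).mpr fun x hx => ?_
  rw [← natCast_zmod_val x, mulDivHom_natCast, natCast_eq_zero_iff] at hx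
  rw [← natCast_zmod_val x, natCast_eq_zero_iff]
  have hpos : 0 < b / a := Nat.div_pos (Nat.le_of_dvd (Nat.pos_of_ne_zero hb) h) (NeZero.pos a)
  exact Nat.dvd_of_mul_dvd_mul_left hpos (by rwa [Nat.div_mul_cancel h])

theorem exists_mem_Icc_natCast_eq [NeZero a] (x : ZMod a) : ∃ m ∈ Icc 1 a, (m : ZMod a) = x :=
  ⟨(x - 1).val + 1, by simpa using (x - 1).val_lt, by simp⟩

end ZMod

section Pairing

variable {ι : Type*} [Fintype ι] {r : ι → ℕ} {N : ℕ}

def pairing (hr : ∀ j, r j ∣ N) : (∀ j, ZMod (r j)) →+ (∀ j, ZMod (r j)) →+ ZMod N :=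
  AddMonoidHom.mk' (fun b => AddMonoidHom.mk' (fun g => ∑ j, ZMod.mulDivHom (hr j) (b j * g j))
    fun g g' => by simp [mul_add, sum_add_distrib])
    fun b b' => by ext; simp [add_mul, sum_add_distrib]

theorem pairing_apply (hr : ∀ j, r j ∣ N) (b g : ∀ j, ZMod (r j)) :
    pairing hr b g = ∑ j, ZMod.mulDivHom (hr j) (b j * g j) := rfl

theorem pairing_natCast (hr : ∀ j, r j ∣ N) (β ω : ι → ℕ) :
    pairing hr (fun j => β j) (fun j => ω j) = ((∑ j, N / r j * ω j * β j : ℕ) : ZMod N) := by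
  simp only [pairing_apply, ← Nat.cast_mul, ZMod.mulDivHom_natCast, Nat.cast_sum]
  exact sum_congr rfl fun j _ => by ring_nf

theorem pairing_injective [DecidableEq ι] (hr : ∀ j, r j ∣ N) (hN : N ≠ 0) :
    Function.Injective (pairing hr) := by
  refine (injective_iff_map_eq_zero _).mpr fun b hb => funext fun j => ?_
  have hj := DFunLike.congr_fun hb (Pi.single j 1)
  rw [pairing_apply, sum_eq_single j (fun i _ hij => by simp [hij]) (by simp)] at hj
  exact ZMod.mulDivHom_injective (hr j) hN (by simpa using hj)

theorem nsmul_pairing_eq_zero_iff (hr : ∀ j, r j ∣ N) (hN : N ≠ 0) (β : ι → ℕ) (m : ℕ) :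
    m • pairing hr (fun j => β j) = 0 ↔ (univ.lcm fun j => r j / (r j).gcd (β j)) ∣ m := by
  classical
  rw [← map_nsmul, map_eq_zero_iff _ (pairing_injective hr hN), funext_iff, Finset.lcm_dvd_iff]
  simp only [Pi.smul_apply, Pi.zero_apply, mem_univ, true_imp_iff]
  refine forall_congr' fun j => ?_
  have hj : r j ≠ 0 := fun h => hN (Nat.eq_zero_of_zero_dvd (h ▸ hr j))
  rw [← ZMod.addOrderOf_coe _ hj, addOrderOf_dvd_iff_nsmul_eq_zero]

end Pairing

section Representatives

variable {n : ℕ} {r : Fin (n+1) → ℕ}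

theorem mem_Rfin' {β : Fin (n+1) → ℕ} : β ∈ Rfin' r ↔ ∀ j, β j < r j := by
  simp [Rfin']

theorem injOn_natCast_Rfin' :
    Set.InjOn (fun (β : Fin (n+1) → ℕ) j => (β j : ZMod (r j))) (Rfin' r) := by
  intro β hβ β' hβ' h
  funext j
  have hj := congrArg ZMod.val (congrFun h j)
  simp only [ZMod.val_natCast] at hj
  rwa [Nat.mod_eq_of_lt (mem_Rfin'.mp hβ j), Nat.mod_eq_of_lt (mem_Rfin'.mp hβ' j)] at hj

theorem exists_mem_Rfin'_natCast_eq (hr : ∀ j, 0 < r j) (b : ∀ j, ZMod (r j)) :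
    ∃ β ∈ Rfin' r, (fun j => (β j : ZMod (r j))) = b := by
  have (j : Fin (n+1)) : NeZero (r j) := ⟨(hr j).ne'⟩
  exact ⟨fun j => (b j).val, mem_Rfin'.mpr fun j => (b j).val_lt,
    funext fun j => ZMod.natCast_zmod_val (b j)⟩

theorem mem_Aset_iff (hd : ∀ j, r j ∣ r (Fin.last n)) {β ω : Fin (n+1) → ℕ} :
    ω ∈ Aset r β ↔
      (∀ j, ω j ∈ Icc 1 (r j)) ∧ pairing hd (fun j => β j) (fun j => ω j) = 0 := by
  rw [Aset, mem_filter, Fintype.mem_piFinset, pairing_natCast, ZMod.natCast_eq_zero_iff,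
    Nat.dvd_iff_mod_eq_zero]

theorem Aset_eq_Aset_iff (hr : ∀ j, 0 < r j) (hd : ∀ j, r j ∣ r (Fin.last n))
    (β β' : Fin (n+1) → ℕ) :
    Aset r β' = Aset r β ↔
      (pairing hd (fun j => β' j)).ker = (pairing hd (fun j => β j)).ker := by
  have (j : Fin (n+1)) : NeZero (r j) := ⟨(hr j).ne'⟩
  constructor
  · intro h
    ext g
    choose ω hω hωg using fun j => ZMod.exists_mem_Icc_natCast_eq (g j)
    have hg : (fun j => (ω j : ZMod (r j))) = g := funext hωg
    have := congrArg (ω ∈ ·) h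
    simpa [mem_Aset_iff hd, hω, hg] using this
  · intro h
    ext ω
    simp only [mem_Aset_iff hd, ← AddMonoidHom.mem_ker, h]

end Representatives

theorem stmt_15_general (r : Fin (n+1) → ℕ) (hr : ∀ j, 0 < r j)
    (hchain : ∀ i j : Fin (n+1), i ≤ j → r i ∣ r j)
    (β : Fin (n+1) → ℕ) :
    ((Rfin' r).filter fun β' => Aset r β' = Aset r β).card = Nat.totient (eOf r β) := by
  classical
  have hd (j : Fin (n+1)) : r j ∣ r (Fin.last n) := hchain j _ (Fin.le_last j)
  have hN : r (Fin.last n) ≠ 0 := (hr _).ne'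
  have : NeZero (r (Fin.last n)) := ⟨hN⟩
  let χ (β : Fin (n+1) → ℕ) := pairing hd fun j => (β j : ZMod (r j))
  obtain ⟨g₀, hg₀⟩ := exists_forall_mem_zmultiples_apply (χ β)
  have he : addOrderOf (χ β g₀) = eOf r β := Nat.dvd_right_iff_eq.mp fun m =>
    (addOrderOf_apply_dvd_iff hg₀ m).trans (nsmul_pairing_eq_zero_iff hd hN β m)
  rw [filter_congr fun β' _ => Aset_eq_Aset_iff hr hd β β', ← he]
  refine card_filter_ker_eq χ (Rfin' r) ((pairing_injective hd hN).comp_injOn injOn_natCast_Rfin')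
    (fun k => ?_) hg₀
  obtain ⟨β', hβ', hcast⟩ := exists_mem_Rfin'_natCast_eq hr (k • fun j => (β j : ZMod (r j)))
  exact ⟨β', hβ', by simp only [χ, hcast, map_nsmul]⟩

theorem stmt_15 (r : Fin (n+1) → ℕ) (hr : ∀ j, 0 < r j)
    (hchain : ∀ i j : Fin (n+1), i ≤ j → r i ∣ r j)
    (β : Fin (n+1) → ℕ) (hβ : β ∈ Rfin' r) :
    ((Rfin' r).filter fun β' => Aset r β' = Aset r β).card = Nat.totient (eOf r β) :=
  stmt_15_general r hr hchain β
end

section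
/- Let p be a prime dividing r_n and β ∈ R'. Then |A_{β,p}| = p^{v_p(|G|) − v_p(e(β))}, where |G| = r_1⋯r_n. -/
/-!
Write `m = v_p(r_n)` and `v_j = v_p(r_j) ≤ m`. Reading `ω_j` modulo `p^{v_j}` identifies
`A_{β,p}` with the kernel of `ω ↦ ∑ p^{m - v_j} β_j ω_j` from `∏_j ℤ/p^{v_j}` to `ℤ/p^m`.
The coefficient `p^{m - v_j} β_j` generates the same subgroup of `ℤ/p^m` as `p^{m - w_j}`, where
`w_j = v_p(r_j / gcd(r_j, β_j))`, so the image is the subgroup of order `p^V` with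
`V = max_j w_j = v_p(e(β))`, and the kernel has `p^{v_p|G|} / p^V` elements.
-/

open Finset

namespace ZMod

lemma natCast_injOn_Icc {N : ℕ} : Set.InjOn (Nat.cast : ℕ → ZMod N) (Set.Icc 1 N) := by
  intro a ⟨_, ha⟩ b ⟨_, hb⟩ hab
  rw [ZMod.natCast_eq_natCast_iff'] at hab
  rcases ha.lt_or_eq with ha | rfl <;> rcases hb.lt_or_eq with hb | rfl
  · rwa [Nat.mod_eq_of_lt ha, Nat.mod_eq_of_lt hb] at hab
  · rw [Nat.mod_eq_of_lt ha, Nat.mod_self] at hab; omega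
  · rw [Nat.mod_eq_of_lt hb, Nat.mod_self] at hab; omega
  · rfl

lemma natCast_surjOn_Icc {N : ℕ} [NeZero N] :
    Set.SurjOn (Nat.cast : ℕ → ZMod N) (Set.Icc 1 N) Set.univ := by
  intro z _
  by_cases hz : z = 0
  · exact ⟨N, ⟨NeZero.one_le, le_rfl⟩, by rw [hz, ZMod.natCast_self]⟩
  · refine ⟨z.val, ⟨?_, (ZMod.val_lt z).le⟩, ZMod.natCast_zmod_val z⟩
    exact Nat.one_le_iff_ne_zero.mpr ((ZMod.val_ne_zero z).mpr hz)

def mulLeftHom (N M c : ℕ) (h : M ∣ c * N) : ZMod N →+ ZMod M :=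
  ZMod.lift N ⟨zmultiplesHom (ZMod M) (c : ZMod M), by
    simpa [mul_comm, ← Nat.cast_mul, ZMod.natCast_eq_zero_iff] using h⟩

lemma mulLeftHom_natCast {N M c : ℕ} (h : M ∣ c * N) (x : ℕ) :
    mulLeftHom N M c h x = ((c * x : ℕ) : ZMod M) := by
  rw [← Int.cast_natCast, mulLeftHom, ZMod.lift_coe]
  simp [mul_comm]

lemma exists_natCast_pow_mul_mul_eq {p : ℕ} [hp : Fact p.Prime] (a m : ℕ) {b : ℕ}
    (hb : b ≠ 0) : ∃ x : ℕ,
      ((p ^ a * b * x : ℕ) : ZMod (p ^ m)) = ((p ^ (a + padicValNat p b) : ℕ) : ZMod (p ^ m)) := by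
  obtain ⟨e, u, hpu, rfl⟩ := Nat.exists_eq_pow_mul_and_not_dvd hb p hp.out.ne_one
  have hu : u.Coprime (p ^ m) := (hp.out.coprime_iff_not_dvd.mpr hpu).symm.pow_right m
  refine ⟨((ZMod.unitOfCoprime u hu)⁻¹ : (ZMod (p ^ m))ˣ).val.val, ?_⟩
  have hval : padicValNat p (p ^ e * u) = e := by
    rw [padicValNat.mul (pow_ne_zero _ hp.out.ne_zero) (by rintro rfl; simp at hpu),
      padicValNat.prime_pow, padicValNat.eq_zero_of_not_dvd hpu, add_zero]
  have hinv : (u : ZMod (p ^ m)) * ((ZMod.unitOfCoprime u hu)⁻¹ : (ZMod (p ^ m))ˣ) = 1 := by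
    rw [← ZMod.coe_unitOfCoprime u hu, Units.mul_inv]
  rw [hval]
  push_cast
  rw [ZMod.natCast_zmod_val, pow_add, mul_assoc, mul_assoc, hinv, mul_one]

end ZMod

section WeightedSum

variable {ι : Type*} [Fintype ι]

lemma card_filter_piFinset_Icc [DecidableEq ι] (N : ι → ℕ) [∀ j, NeZero (N j)]
    (P : (∀ j, ZMod (N j)) → Prop) [DecidablePred P] :
    #{ω ∈ Fintype.piFinset fun j => Icc 1 (N j) | P fun j => ω j} = #{z | P z} := by
  refine card_nbij (fun ω j => ω j) (fun ω hω => ?_) (fun ω hω ω' hω' h => ?_)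
    (fun z hz => ?_)
  · simpa using (mem_filter.mp hω).2
  · simp only [coe_filter, Fintype.mem_piFinset, mem_Icc, Set.mem_ofPred_eq] at hω hω'
    funext j
    exact ZMod.natCast_injOn_Icc (hω.1 j) (hω'.1 j) (congrFun h j)
  · have hz : P z := by simpa using hz
    choose ω hω hωz using fun j => ZMod.natCast_surjOn_Icc (N := N j) (Set.mem_univ (z j))
    have hω_eq : (fun j => (ω j : ZMod (N j))) = z := funext hωz
    refine ⟨ω, ?_, hω_eq⟩
    simp only [coe_filter, Fintype.mem_piFinset, mem_Icc, Set.mem_ofPred_eq, hω_eq]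
    exact ⟨hω, hz⟩

def weightedSumHom (N : ι → ℕ) (M : ℕ) (c : ι → ℕ) (hc : ∀ j, M ∣ c j * N j) :
    (∀ j, ZMod (N j)) →+ ZMod M :=
  ∑ j, (ZMod.mulLeftHom (N j) M (c j) (hc j)).comp (Pi.evalAddMonoidHom _ j)

variable {N : ι → ℕ} {M : ℕ} {c : ι → ℕ}

lemma weightedSumHom_natCast (hc : ∀ j, M ∣ c j * N j) (ω : ι → ℕ) :
    weightedSumHom N M c hc (fun j => ω j) = ((∑ j, c j * ω j : ℕ) : ZMod M) := by
  simp [weightedSumHom, ZMod.mulLeftHom_natCast]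

lemma range_weightedSumHom [∀ j, NeZero (N j)] (hc : ∀ j, M ∣ c j * N j) {d : ℕ}
    (hd : ∀ j, d ∣ c j) (hgen : ∃ j, ∃ x : ℕ, ((c j * x : ℕ) : ZMod M) = d) :
    (weightedSumHom N M c hc).range = AddSubgroup.zmultiples (d : ZMod M) := by
  classical
  apply le_antisymm
  · rintro _ ⟨z, rfl⟩
    obtain ⟨k, hk⟩ : d ∣ ∑ j, c j * (z j).val := dvd_sum fun j _ => (hd j).mul_right _
    refine ⟨k, ?_⟩
    have hz : z = fun j => ((z j).val : ZMod (N j)) :=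
      funext fun j => (ZMod.natCast_zmod_val _).symm
    show (k : ℤ) • (d : ZMod M) = _
    rw [hz, weightedSumHom_natCast, hk, natCast_zsmul, nsmul_eq_mul, Nat.cast_mul, mul_comm]
  · obtain ⟨j, x, hx⟩ := hgen
    rw [AddSubgroup.zmultiples_le, ← hx]
    refine ⟨fun i => ((if i = j then x else 0 : ℕ) : ZMod (N i)), ?_⟩
    rw [weightedSumHom_natCast]
    simp

theorem card_filter_sum_mul_mod_eq_zero_mul [DecidableEq ι] [∀ j, NeZero (N j)] [NeZero M]
    (hc : ∀ j, M ∣ c j * N j) {d : ℕ} (hdM : d ∣ M)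
    (hd : ∀ j, d ∣ c j) (hgen : ∃ j, ∃ x : ℕ, ((c j * x : ℕ) : ZMod M) = d) :
    #{ω ∈ Fintype.piFinset fun j => Icc 1 (N j) | (∑ j, c j * ω j) % M = 0} * (M / d) =
      ∏ j, N j := by
  set φ := weightedSumHom N M c hc
  have hcount : #{ω ∈ Fintype.piFinset fun j => Icc 1 (N j) | (∑ j, c j * ω j) % M = 0} =
      Nat.card φ.ker := by
    simp_rw [← Nat.dvd_iff_mod_eq_zero, ← ZMod.natCast_eq_zero_iff,
      ← weightedSumHom_natCast hc]
    rw [card_filter_piFinset_Icc N (fun z => φ z = 0), ← Fintype.card_subtype,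
      ← Nat.card_eq_fintype_card]
    rfl
  have hrange : Nat.card φ.range = M / d := by
    rw [range_weightedSumHom hc hd hgen, Nat.card_zmultiples,
      ZMod.addOrderOf_coe _ (NeZero.ne M), Nat.gcd_eq_right hdM]
  rw [hcount, ← hrange, ← AddSubgroup.index_ker, AddSubgroup.card_mul_index, Nat.card_pi]
  simp

end WeightedSum

section PadicVal

variable {p : ℕ} [hp : Fact p.Prime]

lemma padicValNat_finset_prod {ι : Type*} (s : Finset ι) {f : ι → ℕ}
    (hf : ∀ i ∈ s, f i ≠ 0) :
    padicValNat p (∏ i ∈ s, f i) = ∑ i ∈ s, padicValNat p (f i) := by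
  rw [← Nat.factorization_def _ hp.out, Nat.factorization_prod hf, Finsupp.finsetSum_apply]
  exact sum_congr rfl fun i _ => Nat.factorization_def _ hp.out

lemma padicValNat_finset_lcm {ι : Type*} [DecidableEq ι] (s : Finset ι) {f : ι → ℕ}
    (hf : ∀ i ∈ s, f i ≠ 0) :
    padicValNat p (s.lcm f) = s.sup fun i => padicValNat p (f i) := by
  induction s using Finset.induction with
  | empty => simp
  | insert a s ha ih =>
    have hfa : f a ≠ 0 := hf a (mem_insert_self a s)
    have hfs : ∀ i ∈ s, f i ≠ 0 := fun i hi => hf i (mem_insert_of_mem hi)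
    have hlcm : s.lcm f ≠ 0 := fun h => by
      obtain ⟨i, hi, hfi⟩ := Finset.lcm_eq_zero_iff.mp h
      exact hfs i hi hfi
    rw [lcm_insert, sup_insert, lcm_eq_nat_lcm, ← ih hfs, ← Nat.factorization_def _ hp.out,
      Nat.factorization_lcm hfa hlcm, Finsupp.sup_apply, Nat.factorization_def _ hp.out,
      Nat.factorization_def _ hp.out]

lemma padicValNat_div_gcd {a b : ℕ} (ha : a ≠ 0) (hb : b ≠ 0) :
    padicValNat p (a / a.gcd b) = padicValNat p a - padicValNat p b := by
  rw [← Nat.factorization_def _ hp.out, Nat.factorization_div (Nat.gcd_dvd_left a b),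
    Finsupp.tsub_apply, Nat.factorization_gcd ha hb, Finsupp.inf_apply,
    Nat.factorization_def _ hp.out, Nat.factorization_def _ hp.out]
  omega

lemma pow_sub_padicValNat_div_gcd_dvd {a : ℕ} (ha : a ≠ 0) (b : ℕ) :
    p ^ (padicValNat p a - padicValNat p (a / a.gcd b)) ∣ b := by
  rcases eq_or_ne b 0 with rfl | hb
  · exact dvd_zero _
  rw [padicValNat_div_gcd ha hb]
  exact (pow_dvd_pow p (by omega)).trans pow_padicValNat_dvd

end PadicVal

theorem card_Apset_mul_pow_padicValNat_eOf {n : ℕ} (r : Fin (n+1) → ℕ) (hr : ∀ j, 0 < r j)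
    (hdvd : ∀ j, r j ∣ r (Fin.last n)) {p : ℕ} (hp : p.Prime) (β : Fin (n+1) → ℕ) :
    #(Apset r p β) * p ^ padicValNat p (eOf r β) = p ^ padicValNat p (cardG r) := by
  have := Fact.mk hp
  set m := padicValNat p (r (Fin.last n))
  set v := fun j => padicValNat p (r j)
  set w := fun j => padicValNat p (r j / (r j).gcd (β j))
  set V := padicValNat p (eOf r β)
  have hrne (j) : r j ≠ 0 := (hr j).ne'
  have hvm (j) : v j ≤ m :=
    (padicValNat_dvd_iff_le (hrne _)).mp (pow_padicValNat_dvd.trans (hdvd j))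
  have hwv (j) : w j ≤ v j := (padicValNat_dvd_iff_le (hrne j)).mp
    (pow_padicValNat_dvd.trans (Nat.div_dvd_of_dvd (Nat.gcd_dvd_left _ _)))
  have hV : V = univ.sup w := padicValNat_finset_lcm _ fun j _ =>
    (Nat.div_pos (Nat.gcd_le_left _ (hr j)) (Nat.gcd_pos_of_pos_left _ (hr j))).ne'
  have hwV (j) : w j ≤ V := hV ▸ le_sup (mem_univ j)
  have hVm : V ≤ m := hV ▸ Finset.sup_le fun j _ => (hwv j).trans (hvm j)
  have hc (j) : p ^ m ∣ p ^ (m - v j) * β j * p ^ v j :=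
    Dvd.intro (β j) (by rw [mul_right_comm, ← pow_add, Nat.sub_add_cancel (hvm j)])
  have hd (j) : p ^ (m - V) ∣ p ^ (m - v j) * β j := by
    have := hwV j
    have := hwv j
    have := hvm j
    refine (pow_dvd_pow p (by omega : m - V ≤ m - v j + (v j - w j))).trans ?_
    rw [pow_add]
    exact mul_dvd_mul_left _ (pow_sub_padicValNat_div_gcd_dvd (hrne j) (β j))
  -- the generator `p^{m-V}` comes from an index attaining `V = max_j w_j`
  have hgen : ∃ j, ∃ x : ℕ,
      ((p ^ (m - v j) * β j * x : ℕ) : ZMod (p ^ m)) = (p ^ (m - V) : ℕ) := by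
    obtain ⟨j, -, hj⟩ := exists_mem_eq_sup univ univ_nonempty w
    rcases Nat.eq_zero_or_pos V with hV0 | hVpos
    · exact ⟨j, 0, by rw [hV0, Nat.sub_zero, ZMod.natCast_self, mul_zero, Nat.cast_zero]⟩
    have hβ : β j ≠ 0 := by
      rintro h
      have : w j = 0 := by simp [w, h, Nat.div_self (hr j)]
      omega
    obtain ⟨x, hx⟩ := ZMod.exists_natCast_pow_mul_mul_eq (p := p) (m - v j) m hβ
    have hwj : w j = v j - padicValNat p (β j) := padicValNat_div_gcd (hrne j) hβ
    refine ⟨j, x, hx.trans ?_⟩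
    congr 3
    have := hvm j
    omega
  have hA : Apset r p β = {ω ∈ Fintype.piFinset fun j => Icc 1 (p ^ v j) |
      (∑ j, p ^ (m - v j) * β j * ω j) % p ^ m = 0} :=
    filter_congr fun ω _ => by simp only [mul_right_comm _ (ω _) (β _)]; exact Iff.rfl
  have key := card_filter_sum_mul_mod_eq_zero_mul hc (pow_dvd_pow p (Nat.sub_le m V)) hd hgen
  rw [← hA, Nat.pow_div (Nat.sub_le m V) hp.pos, Nat.sub_sub_self hVm,
    prod_pow_eq_pow_sum] at key
  rwa [cardG, padicValNat_finset_prod _ fun j _ => hrne j]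

theorem stmt_16_general (r : Fin (n+1) → ℕ) (hr : ∀ j, 0 < r j)
    (hchain : ∀ i j : Fin (n+1), i ≤ j → r i ∣ r j)
    (p : ℕ) (hp : p.Prime)
    (β : Fin (n+1) → ℕ) :
    (Apset r p β).card = p ^ (padicValNat p (cardG r) - padicValNat p (eOf r β)) := by
  have key := card_Apset_mul_pow_padicValNat_eOf r hr (fun j => hchain j _ (Fin.le_last j)) hp β
  have hle : padicValNat p (eOf r β) ≤ padicValNat p (cardG r) :=
    (Nat.pow_dvd_pow_iff_le_right hp.one_lt).mp (Dvd.intro_left _ key)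
  rw [← Nat.pow_div hle hp.pos, ← key, Nat.mul_div_cancel _ (pow_pos hp.pos _)]

theorem stmt_16 (r : Fin (n+1) → ℕ) (hr : ∀ j, 0 < r j)
    (hchain : ∀ i j : Fin (n+1), i ≤ j → r i ∣ r j)
    (p : ℕ) (hp : p.Prime) (hpr : p ∣ r (Fin.last n))
    (β : Fin (n+1) → ℕ) (hβ : β ∈ Rfin' r) :
    (Apset r p β).card = p ^ (padicValNat p (cardG r) - padicValNat p (eOf r β)) :=
  stmt_16_general r hr hchain p hp β
end
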